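/- Let { x_{t,k} }_{t ∈ [T], k ∈ [K]} ⊂ ℝ^d with ‖x_{t,k}‖₂ ≤ 1 for all t, k, let λ > 0, and let V_t = λ I_d + Σ_{s=1}^{t−1} Σ_{k=1}^K x_{s,k} x_{s,k}ᵀ. Define H_T = { t ∈ [T] : Σ_{k=1}^K ‖x_{t,k}‖²_{V_t^{−1}} > 1 }. Then |H_T| ≤ (2d / log 2) · log( 1 + K/(λ log 2) ). -/

import Mathlib

/-- The quadratic form `vᵀ M v` associated with a square matrix `M`. -/
noncomputable def quadForm {n : Type*} [Fintype n] (M : Matrix n n ℝ) (v : n → ℝ) : ℝ :=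
  ∑ i, ∑ j, v i * M i j * v j

/-!
Let `t₁ < ⋯ < t_m` be the counted rounds and let `W_j = λI + Σ_{i<j} Σ_k x_{t_i,k} x_{t_i,k}ᵀ` be
the design matrix built from the first `j` of them only. Since `W_j ≤ V_{t_j}` in the Loewner order,
the potential of round `t_j` measured in `W_j⁻¹` still exceeds `1`, so the determinant inequality
`det (A + Σ_k x_k x_kᵀ) ≥ det A · (1 + Σ_k x_kᵀ A⁻¹ x_k)` gives `det W_{j+1} ≥ 2 det W_j`. With
AM–GM on the eigenvalues, `2^m λ^d ≤ det W_m ≤ (tr W_m / d)^d ≤ (λ + mK/d)^d`, that is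
`m log 2 ≤ d log (1 + mK/(dλ))`, and concavity of `log` turns this implicit bound into the
explicit one.
-/

open Matrix Finset Real
open scoped MatrixOrder

theorem quadForm_eq_dotProduct_mulVec {n : Type*} [Fintype n] (M : Matrix n n ℝ) (v : n → ℝ) :
    quadForm M v = v ⬝ᵥ M *ᵥ v := by
  simp only [quadForm, dotProduct, mulVec, Finset.mul_sum, mul_assoc]

namespace Finset

theorem one_add_sum_le_prod_one_add {ι R : Type*} [CommSemiring R] [PartialOrder R]
    [IsOrderedRing R] {s : Finset ι} {f : ι → R} (hf : ∀ i ∈ s, 0 ≤ f i) :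
    1 + ∑ i ∈ s, f i ≤ ∏ i ∈ s, (1 + f i) := by
  induction s using Finset.cons_induction with
  | empty => simp
  | cons a s ha ih =>
    rw [prod_cons, sum_cons]
    have hfa := hf a (mem_cons_self a s)
    have hs := fun i hi => hf i (mem_cons_of_mem hi)
    calc 1 + (f a + ∑ i ∈ s, f i) ≤ 1 + (f a + ∑ i ∈ s, f i) + f a * ∑ i ∈ s, f i :=
          le_add_of_nonneg_right (mul_nonneg hfa (sum_nonneg hs))
      _ = (1 + f a) * (1 + ∑ i ∈ s, f i) := by ring
      _ ≤ (1 + f a) * ∏ i ∈ s, (1 + f i) := by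
          gcongr
          · exact add_nonneg zero_le_one hfa
          · exact ih hs

theorem prod_le_sum_div_card_pow {ι : Type*} (s : Finset ι) (f : ι → ℝ) (hf : ∀ i ∈ s, 0 ≤ f i) :
    ∏ i ∈ s, f i ≤ ((∑ i ∈ s, f i) / #s) ^ #s := by
  rcases s.eq_empty_or_nonempty with rfl | hs
  · simp
  have hcard : (#s : ℝ) ≠ 0 := by exact_mod_cast hs.card_pos.ne'
  have hamgm := geom_mean_le_arith_mean_weighted s (fun _ => (#s : ℝ)⁻¹) f
    (fun _ _ => by positivity) (by simp [hcard]) hf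
  rw [finsetProd_rpow s f hf, ← mul_sum, inv_mul_eq_div] at hamgm
  calc ∏ i ∈ s, f i = ((∏ i ∈ s, f i) ^ (#s : ℝ)⁻¹) ^ #s :=
        (rpow_inv_natCast_pow (prod_nonneg hf) (by exact_mod_cast hcard)).symm
    _ ≤ ((∑ i ∈ s, f i) / #s) ^ #s := by
        gcongr
        exact rpow_nonneg (prod_nonneg hf) _

end Finset

namespace Matrix

variable {n : Type*} [Fintype n] [DecidableEq n]

theorem PosSemidef.det_le_trace_div_card_pow {A : Matrix n n ℝ} (hA : A.PosSemidef) :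
    A.det ≤ (A.trace / Fintype.card n) ^ Fintype.card n := by
  rw [hA.isHermitian.det_eq_prod_eigenvalues, hA.isHermitian.trace_eq_sum_eigenvalues]
  simpa using prod_le_sum_div_card_pow univ _ (fun i _ => hA.eigenvalues_nonneg i)

theorem IsHermitian.det_one_add {A : Matrix n n ℝ} (hA : A.IsHermitian) :
    (1 + A).det = ∏ i, (1 + hA.eigenvalues i) := by
  set U : Matrix n n ℝ := (hA.eigenvectorUnitary : Matrix n n ℝ)
  have hUU : U * star U = 1 := Unitary.coe_mul_star_self hA.eigenvectorUnitary
  have hA' : A = U * diagonal hA.eigenvalues * star U := by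
    conv_lhs => rw [hA.spectral_theorem]
    simp [U]
  have h1A : 1 + A = U * diagonal (fun i => 1 + hA.eigenvalues i) * star U := by
    have hdiag : diagonal (fun i => 1 + hA.eigenvalues i) = 1 + diagonal hA.eigenvalues := by
      rw [← diagonal_one, diagonal_add]
    rw [hdiag, mul_add, add_mul, mul_one, hUU, ← hA']
  rw [h1A, det_mul, det_mul, mul_right_comm, ← det_mul, hUU, det_one, one_mul, det_diagonal]

theorem PosSemidef.one_add_trace_le_det_one_add {A : Matrix n n ℝ} (hA : A.PosSemidef) :
    1 + A.trace ≤ (1 + A).det := by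
  rw [hA.isHermitian.det_one_add, hA.isHermitian.trace_eq_sum_eigenvalues]
  simpa using one_add_sum_le_prod_one_add (fun i _ => hA.eigenvalues_nonneg i)

theorem PosDef.det_mul_one_add_trace_le_det_add {A Δ : Matrix n n ℝ} (hA : A.PosDef) (hΔ : 0 ≤ Δ) :
    A.det * (1 + (A⁻¹ * Δ).trace) ≤ (A + Δ).det := by
  set S := CFC.sqrt A⁻¹
  have hSS : S * S = A⁻¹ := CFC.sqrt_mul_sqrt_self A⁻¹ hA.inv.posSemidef.nonneg
  have hS : Sᵀ = S := by
    simpa [conjTranspose_eq_transpose_of_trivial] using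
      (CFC.sqrt_nonneg A⁻¹).posSemidef.isHermitian.eq
  have hSΔS : (S * Δ * S).PosSemidef := by
    simpa [hS] using (nonneg_iff_posSemidef.mp hΔ).mul_mul_conjTranspose_same S
  have hfactor : A + Δ = A * (1 + A⁻¹ * Δ) := by
    rw [mul_add, mul_one, ← mul_assoc, mul_nonsing_inv A hA.det_pos.ne'.isUnit, one_mul]
  have hdet : (1 + A⁻¹ * Δ).det = (1 + S * Δ * S).det := by
    rw [← hSS, mul_assoc, det_one_add_mul_comm]
  have htrace : (S * Δ * S).trace = (A⁻¹ * Δ).trace := by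
    rw [trace_mul_cycle, hSS]
  rw [hfactor, det_mul, hdet, ← htrace]
  exact mul_le_mul_of_nonneg_left hSΔS.one_add_trace_le_det_one_add hA.det_pos.le

theorem PosDef.dotProduct_inv_mulVec_le_of_le {A B : Matrix n n ℝ} (hA : A.PosDef) (hAB : A ≤ B)
    (w : n → ℝ) : w ⬝ᵥ B⁻¹ *ᵥ w ≤ w ⬝ᵥ A⁻¹ *ᵥ w := by
  have hB : B.PosDef := by simpa using hA.add_posSemidef hAB
  set u := A⁻¹ *ᵥ w
  set y := B⁻¹ *ᵥ w
  have hAu : A *ᵥ u = w := by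
    rw [mulVec_mulVec, mul_nonsing_inv A hA.det_pos.ne'.isUnit, one_mulVec]
  have hBy : B *ᵥ y = w := by
    rw [mulVec_mulVec, mul_nonsing_inv B hB.det_pos.ne'.isUnit, one_mulVec]
  have hsymm : u ⬝ᵥ A *ᵥ y = w ⬝ᵥ y := by
    have hAT : Aᵀ = A := by
      simpa [conjTranspose_eq_transpose_of_trivial] using hA.isHermitian.eq
    rw [dotProduct_mulVec, ← mulVec_transpose, hAT, hAu]
  -- `0 ≤ (u - y)ᵀ A (u - y)` and `0 ≤ yᵀ (B - A) y` add up to `wᵀ y ≤ wᵀ u`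
  have h₁ := hA.posSemidef.dotProduct_mulVec_nonneg (u - y)
  have h₂ := (le_iff.mp hAB).dotProduct_mulVec_nonneg y
  simp only [star_trivial, mulVec_sub, sub_mulVec, dotProduct_sub, sub_dotProduct, hAu, hBy,
    hsymm] at h₁ h₂
  linarith [dotProduct_comm u w, dotProduct_comm y w]

end Matrix

section OuterSum

variable {ι n : Type*} [Fintype ι]

noncomputable def outerSum (x : ι → n → ℝ) : Matrix n n ℝ := ∑ k, vecMulVec (x k) (x k)

variable [Fintype n]

theorem outerSum_nonneg (x : ι → n → ℝ) : 0 ≤ outerSum x :=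
  sum_nonneg fun k _ =>
    nonneg_iff_posSemidef.mpr (by simpa using posSemidef_vecMulVec_self_star (x k))

theorem trace_mul_outerSum (M : Matrix n n ℝ) (x : ι → n → ℝ) :
    (M * outerSum x).trace = ∑ k, x k ⬝ᵥ M *ᵥ x k := by
  simp only [outerSum, mul_sum, trace_sum, mul_vecMulVec, trace_vecMulVec, dotProduct_comm]

theorem trace_outerSum_le_card (x : ι → n → ℝ) (hx : ∀ k, x k ⬝ᵥ x k ≤ 1) :
    (outerSum x).trace ≤ Fintype.card ι := by
  simpa [outerSum, trace_sum, trace_vecMulVec] using sum_le_sum fun k (_ : k ∈ univ) => hx k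

theorem det_mul_one_add_le_det_add_outerSum [DecidableEq n] {A : Matrix n n ℝ} (hA : A.PosDef)
    (x : ι → n → ℝ) : A.det * (1 + ∑ k, x k ⬝ᵥ A⁻¹ *ᵥ x k) ≤ (A + outerSum x).det := by
  simpa [trace_mul_outerSum] using hA.det_mul_one_add_trace_le_det_add (outerSum_nonneg x)

end OuterSum

section DesignMatrix

variable {ι n : Type*} [Fintype ι] [DecidableEq n]

-- `designMatrix lam x (Ico 1 t)` is the paper's `V_t`.
noncomputable def designMatrix (lam : ℝ) (x : ℕ → ι → n → ℝ) (S : Finset ℕ) : Matrix n n ℝ :=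
  lam • 1 + ∑ s ∈ S, outerSum (x s)

variable {lam : ℝ} {x : ℕ → ι → n → ℝ}

theorem designMatrix_insert {a : ℕ} {S : Finset ℕ} (ha : a ∉ S) :
    designMatrix lam x (insert a S) = designMatrix lam x S + outerSum (x a) := by
  rw [designMatrix, designMatrix, sum_insert ha]
  abel

variable [Fintype n]

theorem designMatrix_posDef (hlam : 0 < lam) (S : Finset ℕ) : (designMatrix lam x S).PosDef := by
  have hlamI : (lam • 1 : Matrix n n ℝ).PosDef := by
    rw [smul_one_eq_diagonal]
    exact PosDef.diagonal fun _ => hlam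
  exact hlamI.add_posSemidef
    (nonneg_iff_posSemidef.mp (sum_nonneg fun s _ => outerSum_nonneg (x s)))

theorem designMatrix_mono {S S' : Finset ℕ} (h : S ⊆ S') :
    designMatrix lam x S ≤ designMatrix lam x S' := by
  rw [designMatrix, designMatrix]
  gcongr _ + ?_
  exact sum_le_sum_of_subset_of_nonneg h fun s _ _ => outerSum_nonneg (x s)

theorem trace_designMatrix_le (hx : ∀ s k, x s k ⬝ᵥ x s k ≤ 1) (S : Finset ℕ) :
    (designMatrix lam x S).trace ≤ lam * Fintype.card n + #S * Fintype.card ι := by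
  rw [designMatrix, trace_add, trace_smul, trace_one, trace_sum, smul_eq_mul, ← nsmul_eq_mul]
  gcongr
  exact sum_le_card_nsmul _ _ _ fun s _ => trace_outerSum_le_card (x s) (hx s)

theorem two_pow_card_mul_pow_le_det_designMatrix (hlam : 0 < lam) (H : Finset ℕ)
    (hH : ∀ t ∈ H, 1 ≤ t ∧ 1 < ∑ k, x t k ⬝ᵥ (designMatrix lam x (Ico 1 t))⁻¹ *ᵥ x t k) :
    2 ^ #H * lam ^ Fintype.card n ≤ (designMatrix lam x H).det := by
  induction H using Finset.induction_on_max with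
  | empty => simp [designMatrix]
  | insert a S hlt ih =>
    have haS : a ∉ S := fun h => (hlt a h).false
    obtain ⟨-, hpot_a⟩ := hH a (mem_insert_self a S)
    have hW := designMatrix_posDef (x := x) hlam S
    have hle : designMatrix lam x S ≤ designMatrix lam x (Ico 1 a) :=
      designMatrix_mono fun s hs => mem_Ico.mpr ⟨(hH s (mem_insert_of_mem hs)).1, hlt s hs⟩
    have hpot : 1 < ∑ k, x a k ⬝ᵥ (designMatrix lam x S)⁻¹ *ᵥ x a k :=
      hpot_a.trans_le (sum_le_sum fun k _ => hW.dotProduct_inv_mulVec_le_of_le hle _)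
    rw [designMatrix_insert haS, card_insert_of_notMem haS, pow_succ]
    calc 2 ^ #S * 2 * lam ^ Fintype.card n = 2 * (2 ^ #S * lam ^ Fintype.card n) := by ring
      _ ≤ 2 * (designMatrix lam x S).det := by
          gcongr
          exact ih fun t ht => hH t (mem_insert_of_mem ht)
      _ ≤ (designMatrix lam x S).det * (1 + ∑ k, x a k ⬝ᵥ (designMatrix lam x S)⁻¹ *ᵥ x a k) := by
          nlinarith [hW.det_pos]
      _ ≤ _ := det_mul_one_add_le_det_add_outerSum hW (x a)

end DesignMatrix

namespace Real

theorem log_one_add_lt_one_add_half {a : ℝ} (ha : 0 ≤ a) : log (1 + a) < 1 + a / 2 := by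
  have h := log_le_sub_one_of_pos (show 0 < (1 + a) / 2 by positivity)
  rw [log_div (by positivity) two_ne_zero] at h
  linarith [log_two_lt_d9]

theorem le_two_mul_log_one_add_of_le_log_one_add_mul {a t : ℝ} (ha : 0 ≤ a)
    (h : t ≤ log (1 + a * t)) : t ≤ 2 * log (1 + a) := by
  rcases ha.eq_or_lt with rfl | ha
  · simpa using h
  by_contra! hlt
  set N := 2 * log (1 + a)
  have hN : 0 ≤ N := mul_nonneg zero_le_two (log_nonneg (by linarith))
  have ht : 0 < t := hN.trans_lt hlt
  -- `s ↦ log (1 + a s) - s` is concave and vanishes at `0`, so it stays nonnegative on `[0, t]`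
  have hNle : N ≤ log (1 + a * N) := by
    set θ := N / t
    have hθ : 0 ≤ θ := div_nonneg hN ht.le
    have hθt : θ * t = N := div_mul_cancel₀ N ht.ne'
    have hconc := strictConcaveOn_log_Ioi.concaveOn.2 (Set.mem_Ioi.mpr one_pos)
      (Set.mem_Ioi.mpr (show 0 < 1 + a * t by positivity))
      (sub_nonneg.mpr ((div_le_one ht).mpr hlt.le)) hθ (sub_add_cancel 1 θ)
    simp only [smul_eq_mul, log_one, mul_zero, zero_add] at hconc
    calc N = θ * t := hθt.symm
      _ ≤ θ * log (1 + a * t) := mul_le_mul_of_nonneg_left h hθ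
      _ ≤ log ((1 - θ) * 1 + θ * (1 + a * t)) := hconc
      _ = log (1 + a * N) := by rw [← hθt]; ring_nf
  have hsq : (1 + a) ^ 2 ≤ 1 + a * N := by
    refine (log_le_log_iff (by positivity) (by positivity)).mp ?_
    rw [log_pow]
    push_cast
    exact hNle
  nlinarith [log_one_add_lt_one_add_half ha.le]

end Real

theorem le_of_two_pow_mul_pow_le {m d : ℕ} {K lam : ℝ} (hK : 0 ≤ K) (hlam : 0 < lam)
    (h : 2 ^ m * lam ^ d ≤ ((lam * d + m * K) / d) ^ d) :
    (m : ℝ) ≤ 2 * d / log 2 * log (1 + K / (lam * log 2)) := by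
  rcases d.eq_zero_or_pos with rfl | hd
  · simp only [pow_zero, mul_one] at h
    obtain rfl : m = 0 := by
      by_contra hm
      exact (one_lt_pow₀ one_lt_two hm).not_ge h
    simp
  have hd' : (0 : ℝ) < d := by exact_mod_cast hd
  have hlog2 : 0 < log 2 := log_pos one_lt_two
  have hpow : (2 : ℝ) ^ m ≤ (1 + K / (lam * log 2) * (m * log 2 / d)) ^ d := by
    have hfactor : (lam * d + m * K) / d = lam * (1 + K / (lam * log 2) * (m * log 2 / d)) := by
      field_simp
    rw [hfactor, mul_pow, mul_comm] at h
    exact le_of_mul_le_mul_left h (pow_pos hlam d)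
  have hlog := log_le_log (by positivity) hpow
  rw [log_pow, log_pow] at hlog
  have key := le_two_mul_log_one_add_of_le_log_one_add_mul (by positivity) <|
    (div_le_iff₀' hd').mpr hlog
  rw [div_mul_eq_mul_div, le_div_iff₀ hlog2]
  rw [div_le_iff₀ hd'] at key
  linarith

/-- generalized elliptical potential count lemma.  For a doubly-indexed family of
unit-norm-bounded vectors `x_{t,k}` and `V_t = λ I + Σ_{s=1}^{t-1} Σ_{k=1}^K x_{s,k} x_{s,k}ᵀ`,
the number of rounds `t ∈ [T]` with `Σ_k ‖x_{t,k}‖²_{V_t⁻¹} > 1` is at most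
`(2d/log 2) · log(1 + K/(λ log 2))`. -/
theorem stmt_15 (d T K : ℕ) (x : ℕ → Fin K → EuclideanSpace ℝ (Fin d))
    (hx : ∀ t k, ‖x t k‖ ≤ 1)
    (lam : ℝ) (hlam : 0 < lam)
    (V : ℕ → Matrix (Fin d) (Fin d) ℝ)
    (hV : ∀ t, V t = lam • (1 : Matrix (Fin d) (Fin d) ℝ)
      + ∑ s ∈ Finset.Ico 1 t, ∑ k : Fin K, Matrix.of (fun i j => x s k i * x s k j)) :
    (((Finset.Icc 1 T).filter
        (fun t => 1 < ∑ k : Fin K, quadForm ((V t)⁻¹) (fun i => x t k i))).card : ℝ)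
      ≤ (2 * d / Real.log 2) * Real.log (1 + K / (lam * Real.log 2)) := by
  set v : ℕ → Fin K → Fin d → ℝ := fun t k i => x t k i
  have hVv : ∀ t, V t = designMatrix lam v (Ico 1 t) := hV
  have hv : ∀ t k, v t k ⬝ᵥ v t k ≤ 1 := fun t k => by
    have : v t k ⬝ᵥ v t k = ‖x t k‖ ^ 2 := by
      rw [← real_inner_self_eq_norm_sq, EuclideanSpace.inner_eq_star_dotProduct]
      simp [v]
    rw [this]
    exact pow_le_one₀ (norm_nonneg _) (hx t k)
  set H := (Icc 1 T).filter fun t => 1 < ∑ k, quadForm (V t)⁻¹ fun i => x t k i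
  have hH : ∀ t ∈ H, 1 ≤ t ∧ 1 < ∑ k, v t k ⬝ᵥ (designMatrix lam v (Ico 1 t))⁻¹ *ᵥ v t k := by
    intro t ht
    obtain ⟨hmem, hpot⟩ := mem_filter.mp ht
    exact ⟨(mem_Icc.mp hmem).1, by simpa [← hVv, quadForm_eq_dotProduct_mulVec] using hpot⟩
  have hdet := (two_pow_card_mul_pow_le_det_designMatrix hlam H hH).trans
    (designMatrix_posDef (x := v) hlam H).posSemidef.det_le_trace_div_card_pow
  have htrace := trace_designMatrix_le (lam := lam) hv H
  simp only [Fintype.card_fin] at hdet htrace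
  refine le_of_two_pow_mul_pow_le (Nat.cast_nonneg K) hlam (hdet.trans ?_)
  gcongr
  exact div_nonneg (designMatrix_posDef (x := v) hlam H).posSemidef.trace_nonneg d.cast_nonneg
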